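/- (Williamson's diagonalization theorem) Let M be a real symmetric positive definite 2n×2n matrix. Then there exist a real symplectic matrix S (i.e., Sᵀ·J·S = J, where J is the standard symplectic matrix) and positive real numbers λ₁, ..., λₙ such that Sᵀ·M·S is the diagonal matrix diag(λ₁, ..., λₙ, λ₁, ..., λₙ). -/

import Mathlib

open Matrix

/-- The standard symplectic `2n×2n` matrix. -/
noncomputable def stdSymp (n : ℕ) : Matrix (Fin n ⊕ Fin n) (Fin n ⊕ Fin n) ℝ :=
  Matrix.fromBlocks 0 1 (-1) 0

/-!
Write `M = Kᵀ K` with `K` invertible. Then `A = K⁻ᵀ J K⁻¹` is skew-symmetric and invertible, so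
Euclidean space has an orthonormal basis `e_j, f_j` with `A e_j = -d_j f_j`, `A f_j = d_j e_j` and
`d_j > 0`: a unit eigenvector `x` of the symmetric operator `A²` spans, together with `A x`, an
`A`-invariant plane whose orthogonal complement is again `A`-invariant, so one inducts on the
dimension. With `Q` the orthogonal matrix of this basis and `E = diag(d^(-1/2), d^(-1/2))`, the
matrix `S = K⁻¹ Q E` satisfies `Sᵀ J S = J` and `Sᵀ M S = E² = diag(d⁻¹, d⁻¹)`.
-/

open Module
open scoped InnerProductSpace

theorem Orthonormal.sum_elim_cons {𝕜 E : Type*} [RCLike 𝕜] [NormedAddCommGroup E]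
    [InnerProductSpace 𝕜 E] {n : ℕ} {x y : E} {f : Fin n ⊕ Fin n → E}
    (hxy : Orthonormal 𝕜 ![x, y]) (hf : Orthonormal 𝕜 f)
    (hx : ∀ i, inner 𝕜 x (f i) = 0) (hy : ∀ i, inner 𝕜 y (f i) = 0) :
    Orthonormal 𝕜 (Sum.elim (Fin.cons x (f ∘ Sum.inl) : Fin (n + 1) → E)
      (Fin.cons y (f ∘ Sum.inr))) := by
  simp only [orthonormal_vecCons_iff, Fin.forall_fin_one, Matrix.cons_val_zero] at hxy
  obtain ⟨hx1, hxy, hy1, -⟩ := hxy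
  have hf' := orthonormal_iff_ite.mp hf
  rw [orthonormal_iff_ite]
  rintro (i | i) (j | j) <;> cases i using Fin.cases <;> cases j using Fin.cases <;>
    simp [hx1, hy1, hxy, hx, hy, hf', inner_eq_zero_symm, (Fin.succ_ne_zero _).symm]

namespace LinearMap

variable {𝕜 E : Type*} [RCLike 𝕜] [NormedAddCommGroup E] [InnerProductSpace 𝕜 E]

def IsSkewSymmetric (T : E →ₗ[𝕜] E) : Prop :=
  ∀ x y, inner 𝕜 (T x) y = -inner 𝕜 x (T y)

namespace IsSkewSymmetric

variable {T : E →ₗ[𝕜] E}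

theorem isSymmetric_comp_self (hT : T.IsSkewSymmetric) : (T ∘ₗ T).IsSymmetric := fun x y => by
  simp only [comp_apply, hT (T x), hT x, neg_neg]

theorem mapsTo_orthogonal (hT : T.IsSkewSymmetric) {U : Submodule 𝕜 E}
    (hU : ∀ u ∈ U, T u ∈ U) : ∀ w ∈ Uᗮ, T w ∈ Uᗮ := fun w hw u hu =>
  neg_eq_zero.mp ((hT u w).symm.trans (Submodule.inner_right_of_mem_orthogonal (hU u hu) hw))

theorem restrict (hT : T.IsSkewSymmetric) {U : Submodule 𝕜 E} (hU : ∀ u ∈ U, T u ∈ U) :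
    (T.restrict hU).IsSkewSymmetric := fun x y => hT x y

end IsSkewSymmetric

end LinearMap

namespace LinearMap.IsSkewSymmetric

variable {E : Type*} [NormedAddCommGroup E] [InnerProductSpace ℝ E] {T : E →ₗ[ℝ] E}

theorem inner_self_map_eq_zero (hT : T.IsSkewSymmetric) (x : E) : ⟪x, T x⟫_ℝ = 0 := by
  have h := hT x x
  rw [real_inner_comm] at h
  linarith

theorem exists_orthonormal_pair [FiniteDimensional ℝ E] [Nontrivial E]
    (hT : T.IsSkewSymmetric) (hTinj : Function.Injective T) :
    ∃ (x y : E) (c : ℝ), Orthonormal ℝ ![x, y] ∧ 0 < c ∧ T x = -c • y ∧ T y = c • x := by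
  obtain ⟨v, hv⟩ :=
    hT.isSymmetric_comp_self.hasEigenvalue_iSup_of_finiteDimensional.exists_hasEigenvector
  set μ : ℝ := _
  set x := ‖v‖⁻¹ • v
  have hx : ‖x‖ = 1 := norm_smul_inv_norm hv.2
  have hTTx : T (T x) = μ • x := by
    simpa [x, smul_comm μ] using congrArg (‖v‖⁻¹ • ·) hv.apply_eq_smul
  set c := ‖T x‖
  have hc : 0 < c := norm_pos_iff.2 fun h => by
    rw [← map_zero T] at h
    simp [hTinj h] at hx
  -- `⟪T (T x), x⟫ = -‖T x‖²` identifies the eigenvalue of `T²`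
  have hμ : μ = -c ^ 2 := by
    have h := hT (T x) x
    rw [hTTx, real_inner_smul_left, real_inner_self_eq_norm_sq, hx,
      real_inner_self_eq_norm_sq] at h
    simpa using h
  refine ⟨x, -c⁻¹ • T x, c, ?_, hc, ?_, ?_⟩
  · simp [orthonormal_vecCons_iff, hx, norm_smul, c, hc.ne', inner_smul_right,
      hT.inner_self_map_eq_zero]
  · simp [smul_smul, hc.ne']
  · rw [map_smul, hTTx, hμ, smul_smul]
    congr 1
    field_simp

theorem exists_orthonormal_normal_form [FiniteDimensional ℝ E] (hT : T.IsSkewSymmetric)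
    (hTinj : Function.Injective T) {n : ℕ} (hn : finrank ℝ E = 2 * n) :
    ∃ (e : Fin n ⊕ Fin n → E) (c : Fin n → ℝ), Orthonormal ℝ e ∧ (∀ j, 0 < c j) ∧
      (∀ j, T (e (.inl j)) = -c j • e (.inr j)) ∧ ∀ j, T (e (.inr j)) = c j • e (.inl j) := by
  induction n generalizing E with
  | zero =>
    exact ⟨Sum.elim finZeroElim finZeroElim, finZeroElim, .of_isEmpty _, finZeroElim,
      finZeroElim, finZeroElim⟩
  | succ n ih =>
    have : Nontrivial E := nontrivial_of_finrank_pos (R := ℝ) (by omega)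
    obtain ⟨x, y, c₀, hxy, hc₀, hTx, hTy⟩ := hT.exists_orthonormal_pair hTinj
    set U := Submodule.span ℝ (Set.range ![x, y])
    have hxU : x ∈ U := Submodule.subset_span ⟨0, rfl⟩
    have hyU : y ∈ U := Submodule.subset_span ⟨1, rfl⟩
    have hU : ∀ u ∈ U, T u ∈ U := Submodule.span_le (p := U.comap T) |>.2 <| by
      rintro _ ⟨i, rfl⟩
      fin_cases i
      · simpa [hTx] using U.smul_mem (-c₀) hyU
      · simpa [hTy] using U.smul_mem c₀ hxU
    have hW := hT.mapsTo_orthogonal hU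
    have hWrank : finrank ℝ Uᗮ = 2 * n := by
      have := U.finrank_add_finrank_orthogonal
      rw [finrank_span_eq_card hxy.linearIndependent, Fintype.card_fin] at this
      omega
    obtain ⟨e, c, he, hc, hTl, hTr⟩ := ih (hT.restrict hW)
      ((injective_restrict_iff hW).2 (by simp [ker_eq_bot.2 hTinj])) hWrank
    have hTe : ∀ j, T (e j) = T.restrict hW (e j) := fun _ => rfl
    refine ⟨Sum.elim (Fin.cons x ((↑) ∘ e ∘ .inl)) (Fin.cons y ((↑) ∘ e ∘ .inr)), Fin.cons c₀ c,
      hxy.sum_elim_cons (he.comp_linearIsometry Uᗮ.subtypeₗᵢ)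
        (fun i => Submodule.inner_right_of_mem_orthogonal hxU (e i).2)
        (fun i => Submodule.inner_right_of_mem_orthogonal hyU (e i).2),
      Fin.cases hc₀ hc, Fin.cases (by simpa using hTx) fun j => ?_,
      Fin.cases (by simpa using hTy) fun j => ?_⟩
    · simp [hTe, hTl]
    · simp [hTe, hTr]

end LinearMap.IsSkewSymmetric

namespace Matrix

open scoped MatrixOrder Matrix.Norms.L2Operator in
theorem PosDef.exists_isUnit_eq_transpose_mul_self {ι : Type*} [Fintype ι] [DecidableEq ι]
    {M : Matrix ι ι ℝ} (hM : M.PosDef) : ∃ K, IsUnit K ∧ M = Kᵀ * K := by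
  simpa [star_eq_conjTranspose] using
    CStarAlgebra.isStrictlyPositive_iff_eq_star_mul_self.mp hM.isStrictlyPositive

theorem isSkewSymmetric_toEuclideanLin {𝕜 ι : Type*} [RCLike 𝕜] [Fintype ι] [DecidableEq ι]
    {A : Matrix ι ι 𝕜} (hA : Aᴴ = -A) : (toEuclideanLin A).IsSkewSymmetric := fun x y => by
  rw [← LinearMap.adjoint_inner_right, ← toEuclideanLin_conjTranspose_eq_adjoint, hA, map_neg,
    LinearMap.neg_apply, inner_neg_right]

theorem of_ofLp_mul_mul_transpose {ι : Type*} [Fintype ι] [DecidableEq ι]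
    (e : ι → EuclideanSpace ℝ ι) (A : Matrix ι ι ℝ) :
    of (fun i => (e i).ofLp) * A * (of fun i => (e i).ofLp)ᵀ =
      of fun i j => ⟪e i, toEuclideanLin A (e j)⟫_ℝ := by
  ext i j
  rw [mul_mul_apply, of_apply, EuclideanSpace.inner_eq_star_dotProduct, dotProduct_comm]
  rfl

def skewDiagonal {n R : Type*} [DecidableEq n] [Ring R] (d : n → R) : Matrix (n ⊕ n) (n ⊕ n) R :=
  fromBlocks 0 (diagonal d) (-diagonal d) 0

theorem diagonal_sum_elim_mul_skewDiagonal_mul_diagonal_sum_elim {n R : Type*} [Fintype n]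
    [DecidableEq n] [Ring R] (s d : n → R) :
    diagonal (Sum.elim s s) * skewDiagonal d * diagonal (Sum.elim s s) =
      skewDiagonal (s * d * s) := by
  simp [skewDiagonal, ← fromBlocks_diagonal, fromBlocks_multiply]

theorem exists_orthogonal_transpose_mul_mul_eq_skewDiagonal {n : ℕ}
    {A : Matrix (Fin n ⊕ Fin n) (Fin n ⊕ Fin n) ℝ} (hA : Aᵀ = -A) (hA' : IsUnit A) :
    ∃ (Q : Matrix (Fin n ⊕ Fin n) (Fin n ⊕ Fin n) ℝ) (d : Fin n → ℝ),
      Qᵀ * Q = 1 ∧ (∀ j, 0 < d j) ∧ Qᵀ * A * Q = skewDiagonal d := by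
  have hT : (toEuclideanLin A).IsSkewSymmetric :=
    isSkewSymmetric_toEuclideanLin (by rwa [conjTranspose_eq_transpose_of_trivial])
  have hTinj : Function.Injective (toEuclideanLin A) :=
    ((Module.End.isUnit_iff _).1 (hA'.map (toLpLinAlgEquiv 2))).injective
  obtain ⟨e, d, he, hd, hTl, hTr⟩ := hT.exists_orthonormal_normal_form hTinj (n := n)
    (by simp; omega)
  have he' := orthonormal_iff_ite.1 he
  refine ⟨(of fun i => (e i).ofLp)ᵀ, d, ?_, hd, ?_⟩
  · convert of_ofLp_mul_mul_transpose e 1 using 1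
    · simp
    · ext i j
      simp [he', one_apply]
  · rw [transpose_transpose, of_ofLp_mul_mul_transpose]
    ext (i | i) (j | j) <;>
      simp [skewDiagonal, hTl, hTr, inner_smul_right, he', diagonal_apply] <;> grind

end Matrix

theorem stdSymp_eq_neg_J (n : ℕ) : stdSymp n = -J (Fin n) ℝ := by
  simp [stdSymp, J, fromBlocks_neg]

theorem stdSymp_eq_skewDiagonal_one (n : ℕ) : stdSymp n = skewDiagonal 1 := by
  simp [stdSymp, skewDiagonal]

theorem transpose_stdSymp (n : ℕ) : (stdSymp n)ᵀ = -stdSymp n := by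
  rw [stdSymp_eq_neg_J, transpose_neg, J_transpose]

theorem isUnit_stdSymp (n : ℕ) : IsUnit (stdSymp n) := by
  rw [stdSymp_eq_neg_J]
  exact ((isUnit_iff_isUnit_det _).2 (isUnit_det_J _ _)).neg

theorem williamson_diagonalization_general (n : ℕ)
    (M : Matrix (Fin n ⊕ Fin n) (Fin n ⊕ Fin n) ℝ)
    (hMpos : M.PosDef) :
    ∃ (S : Matrix (Fin n ⊕ Fin n) (Fin n ⊕ Fin n) ℝ) (lam : Fin n → ℝ),
      Sᵀ * stdSymp n * S = stdSymp n ∧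
      (∀ j, 0 < lam j) ∧
      Sᵀ * M * S = Matrix.diagonal (Sum.elim lam lam) := by
  obtain ⟨K, hK, rfl⟩ := hMpos.exists_isUnit_eq_transpose_mul_self
  obtain ⟨B, hKB⟩ := hK.exists_right_inv
  have hB : IsUnit B := (isUnit_iff_isUnit_det B).2 (isUnit_det_of_left_inverse hKB)
  obtain ⟨Q, d, hQ, hd, hQA⟩ := exists_orthogonal_transpose_mul_mul_eq_skewDiagonal
    (A := Bᵀ * stdSymp n * B) (by simp [transpose_stdSymp, Matrix.mul_assoc])
    ((((isUnit_transpose B).2 hB).mul (isUnit_stdSymp n)).mul hB)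
  set s : Fin n → ℝ := fun j => √(d j)⁻¹
  have hs : ∀ j, s j * s j = (d j)⁻¹ := fun j => Real.mul_self_sqrt (inv_pos.2 (hd j)).le
  set E := diagonal (Sum.elim s s)
  have hS : ∀ X, (B * Q * E)ᵀ * X * (B * Q * E) = E * (Qᵀ * (Bᵀ * X * B) * Q) * E := by
    simp [E, Matrix.mul_assoc]
  have hM : Bᵀ * (Kᵀ * K) * B = 1 := by
    rw [show Bᵀ * (Kᵀ * K) * B = (K * B)ᵀ * (K * B) by simp [Matrix.mul_assoc], hKB,
      transpose_one, one_mul]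
  refine ⟨B * Q * E, fun j => (d j)⁻¹, ?_, fun j => inv_pos.2 (hd j), ?_⟩
  · rw [hS, hQA, diagonal_sum_elim_mul_skewDiagonal_mul_diagonal_sum_elim,
      stdSymp_eq_skewDiagonal_one]
    congr 1
    ext j
    rw [Pi.mul_apply, Pi.mul_apply, mul_right_comm, hs, inv_mul_cancel₀ (hd j).ne', Pi.one_apply]
  · rw [hS, hM, Matrix.mul_one, hQ, Matrix.mul_one, diagonal_mul_diagonal]
    congr 1
    ext (j | j) <;> exact hs j

/-- Williamson's diagonalization theorem: every real symmetric positive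
definite `2n×2n` matrix `M` can be brought to the diagonal form
`diag(λ₁,...,λₙ,λ₁,...,λₙ)` with `λ_j > 0` by a symplectic congruence
`M ↦ Sᵀ·M·S`. -/
theorem williamson_diagonalization (n : ℕ)
    (M : Matrix (Fin n ⊕ Fin n) (Fin n ⊕ Fin n) ℝ)
    (hMsym : Mᵀ = M) (hMpos : M.PosDef) :
    ∃ (S : Matrix (Fin n ⊕ Fin n) (Fin n ⊕ Fin n) ℝ) (lam : Fin n → ℝ),
      Sᵀ * stdSymp n * S = stdSymp n ∧
      (∀ j, 0 < lam j) ∧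
      Sᵀ * M * S = Matrix.diagonal (Sum.elim lam lam) :=
  williamson_diagonalization_general n M hMpos
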